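/- Let δ be an m×r binary matrix with unordered GLT structure with pivot rows l_1, …, l_r, and for each j let z_j denote the rank of l_j in the increasingly ordered sequence l_(1) < ⋯ < l_(r) of pivots. If δ satisfies the 3579 counting rule CR(r,1), then condition GLT-AR holds: l_j ≤ m − 2(r − z_j + 1) for every j = 1,…,r. In particular, GLT-AR is a necessary condition for CR(r,1), and for sparse GLT structures it is necessary for the row deletion property. -/

import Mathlib

/-!
Let `A` be the set of columns `i` with `l j ≤ l i`; since the pivots are distinct,
`|A| = r - z_j + 1`. Every nonzero row of the submatrix on `A` has index at least `l j`, so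
there are at most `m - l j` of them (rows are 0-based), and `CR(r,1)` applied to `A` gives
`2 |A| + 1 ≤ m - l j`.
-/

open Matrix

/-- The counting rule `CR(r,s)`: every submatrix formed by a nonempty set `S` of
columns has at least `2 * |S| + s` nonzero rows. -/
def CR {I : Type*} [Fintype I] {r : ℕ} (δ : Matrix I (Fin r) Bool) (s : ℕ) : Prop :=
  ∀ S : Finset (Fin r), S.Nonempty →
    2 * S.card + s ≤ (@Finset.filter I (fun i : I => ∃ j ∈ S, δ i j = true) (fun i => inferInstance)
      Finset.univ).card

open Finset

theorem card_filter_ge_add_card_filter_le {ι α : Type*} [Fintype ι] [DecidableEq ι]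
    [LinearOrder α] {f : ι → α} (hf : Function.Injective f) (j : ι) :
    #{i | f j ≤ f i} + #{i | f i ≤ f j} = Fintype.card ι + 1 := by
  have hunion : ({i | f j ≤ f i} : Finset ι) ∪ ({i | f i ≤ f j} : Finset ι) = univ := by
    ext i
    simpa using le_total (f j) (f i)
  have hinter : ({i | f j ≤ f i} : Finset ι) ∩ ({i | f i ≤ f j} : Finset ι) = {j} := by
    ext i
    simp only [mem_inter, mem_filter, mem_univ, true_and, mem_singleton]
    exact ⟨fun ⟨h₁, h₂⟩ => hf (le_antisymm h₂ h₁), fun h => h ▸ ⟨le_rfl, le_rfl⟩⟩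
  rw [← card_union_add_card_inter, hunion, hinter, card_univ, card_singleton]

-- Spelled with the same decidability instance as `CR`, so that `CR δ s` unfolds to bounds on
-- `#(nonzeroRows δ S)`.
def nonzeroRows {I : Type*} [Fintype I] {r : ℕ} (δ : Matrix I (Fin r) Bool) (S : Finset (Fin r)) :
    Finset I :=
  @Finset.filter I (fun i : I => ∃ k ∈ S, δ i k = true) (fun _ => inferInstance) univ

theorem mem_nonzeroRows {I : Type*} [Fintype I] {r : ℕ} {δ : Matrix I (Fin r) Bool}
    {S : Finset (Fin r)} {i : I} :
    i ∈ nonzeroRows δ S ↔ ∃ k ∈ S, δ i k = true := by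
  simp [nonzeroRows]

theorem nonzeroRows_subset_Ici {I : Type*} [Fintype I] [LinearOrder I]
    [LocallyFiniteOrderTop I] {r : ℕ} {δ : Matrix I (Fin r) Bool} {l : Fin r → I}
    (hzero : ∀ k i, i < l k → δ i k = false) {S : Finset (Fin r)} {a : I} (ha : ∀ k ∈ S, a ≤ l k) :
    nonzeroRows δ S ⊆ Ici a := by
  intro i hi
  obtain ⟨k, hk, hik⟩ := mem_nonzeroRows.mp hi
  refine mem_Ici.mpr ((ha k hk).trans (not_lt.mp fun hlt => ?_))
  simp [hzero k i hlt] at hik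

/-- Necessity of condition GLT-AR: let `δ` be a binary matrix with unordered GLT
structure with pairwise distinct pivot rows `l j`, and for each `j` let `z j` be
the (1-based) rank of `l j` among the ordered pivots, i.e. the number of indices
`i` with `l i ≤ l j`. If `δ` satisfies the 3579 counting rule `CR(r,1)`, then
`l_j ≤ m − 2(r − z_j + 1)` holds for all `j` (in 1-based row indexing, i.e.
`(l j) + 1 ≤ m − 2(r − z j + 1)` for 0-based `l j`). -/
theorem counting_rule_implies_GLT_AR {m r : ℕ}
    (δ : Matrix (Fin m) (Fin r) Bool)
    (l : Fin r → Fin m) (hinj : Function.Injective l)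
    (hpiv : ∀ j : Fin r, δ (l j) j = true ∧ ∀ i : Fin m, i < l j → δ i j = false)
    (hcr : CR δ 1) :
    ∀ j : Fin r,
      (l j : ℕ) + 1 ≤
        m - 2 * (r - (Finset.univ.filter fun i : Fin r => l i ≤ l j).card + 1) := by
  intro j
  set A : Finset (Fin r) := {i | l j ≤ l i}
  have hsplit : #A + #{i | l i ≤ l j} = r + 1 := by
    simpa using card_filter_ge_add_card_filter_le hinj j
  have hrows : 2 * #A + 1 ≤ m - l j :=
    calc 2 * #A + 1
        ≤ #(nonzeroRows δ A) := hcr A ⟨j, by simp [A]⟩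
      _ ≤ #(Ici (l j)) := card_le_card <|
          nonzeroRows_subset_Ici (fun k => (hpiv k).2) (by simp [A])
      _ = m - l j := Fin.card_Ici _
  have hle : #{i | l i ≤ l j} ≤ r := (card_filter_le _ _).trans_eq (card_fin r)
  omega
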